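/- arXiv:1908.03551 — 2 statements merged into one kernel-verified Lean document; each statement's English description precedes it below -/
import Mathlib

section
/- The Antimirov reordering automaton accepts the trace closure: for every regular expression E over Σ and every word u, u ∈ [⟦E⟧] if and only if there exists E′ with E →^{I*} (u, E′) and E′↓. -/
open RegularExpression
open scoped Classical

universe u

variable {α : Type u}

/-- Two words are independent if every letter of the first is independent
of every letter of the second. -/
def WIndep (I : α → α → Prop) (u v : List α) : Prop :=
  ∀ a ∈ u, ∀ b ∈ v, I a b

/-- Trace equivalence: the least equivalence relation on words containing
all pairs (x ++ [a,b] ++ y, x ++ [b,a] ++ y) with a I b. -/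
inductive TrEq (I : α → α → Prop) : List α → List α → Prop
  | swap (x y : List α) {a b : α} : I a b → TrEq I (x ++ [a, b] ++ y) (x ++ [b, a] ++ y)
  | refl (u : List α) : TrEq I u u
  | symm {u v : List α} : TrEq I u v → TrEq I v u
  | trans {u v w : List α} : TrEq I u v → TrEq I v w → TrEq I u w

/-- Trace closure of a language. -/
def TrClosure (I : α → α → Prop) (L : Set (List α)) : Set (List α) :=
  {w | ∃ z ∈ L, TrEq I w z}

/-- u ⊲ z ⊳ v with exactly n blocks of u: there are nonempty words u₁,…,uₙ and
words v₀,…,vₙ (with v₁,…,v_{n-1} nonempty) such that u = u₁⋯uₙ, v = v₀⋯vₙ,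
z = v₀u₁v₁⋯uₙvₙ and vⱼ I uᵢ whenever j < i. -/
def ScatN (I : α → α → Prop) (n : ℕ) (u z v : List α) : Prop :=
  ∃ us vs : ℕ → List α,
    (∀ i, 1 ≤ i → i ≤ n → us i ≠ []) ∧
    (∀ j, 1 ≤ j → j ≤ n - 1 → vs j ≠ []) ∧
    u = ((List.range n).map (fun i => us (i + 1))).flatten ∧
    v = ((List.range (n + 1)).map vs).flatten ∧
    z = vs 0 ++ ((List.range n).map (fun i => us (i + 1) ++ vs (i + 1))).flatten ∧
    (∀ i j, 1 ≤ i → i ≤ n → j < i → WIndep I (vs j) (us i))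

/-- u ⊲ z ⊳ v -/
def Scat (I : α → α → Prop) (u z v : List α) : Prop :=
  ∃ n, ScatN I n u z v

/-- u ∼⊲ z ⊳ v -/
def EqScat (I : α → α → Prop) (u z v : List α) : Prop :=
  ∃ u', TrEq I u u' ∧ Scat I u' z v

/-- u ∼⊲ z ⊳∼ v -/
def EqScatEq (I : α → α → Prop) (u z v : List α) : Prop :=
  ∃ u' v', TrEq I u u' ∧ Scat I u' z v' ∧ TrEq I v' v

/-- u ∼⊲_N z ⊳∼ v : as EqScatEq, with the number of blocks bounded by N -/
def EqScatEqLe (I : α → α → Prop) (N : ℕ) (u z v : List α) : Prop :=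
  ∃ u' v', TrEq I u u' ∧ (∃ n ≤ N, ScatN I n u' z v') ∧ TrEq I v' v

/-- Reordering concatenation of words. -/
def rconc (I : α → α → Prop) : List α → List α → Set (List α)
  | [], v => {v}
  | a :: u, [] => {a :: u}
  | a :: u, b :: v =>
      (List.cons a) '' rconc I u (b :: v) ∪
      {z | WIndep I (a :: u) [b] ∧ ∃ w ∈ rconc I (a :: u) v, z = b :: w}
termination_by u v => u.length + v.length

/-- Reordering concatenation lifted to languages. -/
def rconcL (I : α → α → Prop) (L L' : Set (List α)) : Set (List α) :=
  {z | ∃ u ∈ L, ∃ v ∈ L', z ∈ rconc I u v}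

/-- The reorderable part of a language w.r.t. a word. -/
def RPart (I : α → α → Prop) (u : List α) (L : Set (List α)) : Set (List α) :=
  {v ∈ L | WIndep I v u}

/-- The reordering derivative of a language along a word. -/
def RDeriv (I : α → α → Prop) (u : List α) (L : Set (List α)) : Set (List α) :=
  {v | ∃ z ∈ L, EqScat I u z v}

/-- Syntactic reorderable part of a regexp w.r.t. a letter. -/
noncomputable def Rexp (I : α → α → Prop) (a : α) : RegularExpression α → RegularExpression α
  | zero => zero
  | epsilon => epsilon
  | char b => if I a b then char b else zero
  | plus E F => plus (Rexp I a E) (Rexp I a F)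
  | comp E F => comp (Rexp I a E) (Rexp I a F)
  | RegularExpression.star E => star (Rexp I a E)

/-- Brzozowski reordering derivative of a regexp along a letter. -/
noncomputable def Dexp (I : α → α → Prop) (a : α) : RegularExpression α → RegularExpression α
  | zero => zero
  | epsilon => zero
  | char b => if a = b then epsilon else zero
  | plus E F => plus (Dexp I a E) (Dexp I a F)
  | comp E F => plus (comp (Dexp I a E) F) (comp (Rexp I a E) (Dexp I a F))
  | RegularExpression.star E => comp (star (Rexp I a E)) (comp (Dexp I a E) (star E))

/-- Syntactic reorderable part along a word. -/
noncomputable def RexpW (I : α → α → Prop) (u : List α) (E : RegularExpression α) :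
    RegularExpression α :=
  u.foldl (fun E a => Rexp I a E) E

/-- Brzozowski reordering derivative along a word. -/
noncomputable def DexpW (I : α → α → Prop) (u : List α) (E : RegularExpression α) :
    RegularExpression α :=
  u.foldl (fun E a => Dexp I a E) E

/-- Antimirov reordering parts-of-derivatives along a letter. -/
inductive Antim (I : α → α → Prop) : RegularExpression α → α → RegularExpression α → Prop
  | chr (a : α) : Antim I (char a) a epsilon
  | plusL {E F : RegularExpression α} {a E'} : Antim I E a E' → Antim I (plus E F) a E'
  | plusR {E F : RegularExpression α} {a F'} : Antim I F a F' → Antim I (plus E F) a F'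
  | compL {E F : RegularExpression α} {a E'} : Antim I E a E' → Antim I (comp E F) a (comp E' F)
  | compR {E F : RegularExpression α} {a F'} :
      Antim I F a F' → Antim I (comp E F) a (comp (Rexp I a E) F')
  | st {E : RegularExpression α} {a E'} :
      Antim I E a E' → Antim I (star E) a (comp (star (Rexp I a E)) (comp E' (star E)))

/-- Antimirov reordering parts-of-derivatives along a word. -/
inductive AntimW (I : α → α → Prop) : RegularExpression α → List α → RegularExpression α → Prop
  | nil (E : RegularExpression α) : AntimW I E [] E
  | snoc {E : RegularExpression α} {u E' a E''} :
      AntimW I E u E' → Antim I E' a E'' → AntimW I E (u ++ [a]) E''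

/-- The dependence graph of a word: vertices are positions; distinct positions
are adjacent when their letters are not independent. -/
def depGraph (I : α → α → Prop) (w : List α) : SimpleGraph (Fin w.length) where
  Adj i j := i ≠ j ∧ ¬(I (w.get i) (w.get j) ∧ I (w.get j) (w.get i))
  symm := by
    constructor
    intro i j h
    exact ⟨h.1.symm, fun hc => h.2 ⟨hc.2, hc.1⟩⟩
  loopless := by
    constructor
    intro i h
    exact h.1 rfl

/-- A word is connected if its dependence graph is connected. -/
def WordConnected (I : α → α → Prop) (w : List α) : Prop :=
  (depGraph I w).Preconnected

/-- Least fixed point star for the trace-closing semantics. -/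
def starI (I : α → α → Prop) (L : Set (List α)) : Set (List α) :=
  sInf {X | {([] : List α)} ∪ rconcL I L X ⊆ X}

/-- Trace-closing semantics of regular expressions. -/
def langI (I : α → α → Prop) : RegularExpression α → Set (List α)
  | zero => ∅
  | epsilon => {[]}
  | char a => {[a]}
  | plus E F => langI I E ∪ langI I F
  | comp E F => rconcL I (langI I E) (langI I F)
  | RegularExpression.star E => starI I (langI I E)

/-- L has (scattering) rank at most N. -/
def HasRankLe (I : α → α → Prop) (L : Set (List α)) (N : ℕ) : Prop :=
  ∀ u v, u ++ v ∈ TrClosure I L → ∃ z ∈ L, EqScatEqLe I N u z v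

/-- L has uniform (scattering) rank at most N. -/
def HasUniformRankLe (I : α → α → Prop) (L : Set (List α)) (N : ℕ) : Prop :=
  ∀ w ∈ TrClosure I L, ∃ z ∈ L, ∀ u v, w = u ++ v → EqScatEqLe I N u z v

/-- Star-connected regular expressions. -/
inductive StarConnected (I : α → α → Prop) : RegularExpression α → Prop
  | zero : StarConnected I zero
  | epsilon : StarConnected I epsilon
  | chr (a : α) : StarConnected I (char a)
  | plus {E F : RegularExpression α} :
      StarConnected I E → StarConnected I F → StarConnected I (plus E F)
  | comp {E F : RegularExpression α} :
      StarConnected I E → StarConnected I F → StarConnected I (comp E F)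
  | st {E : RegularExpression α} :
      StarConnected I E → (∀ w ∈ E.matches', WordConnected I w) → StarConnected I (star E)

/-- Refined Antimirov reordering parts-of-derivatives along a letter. -/
inductive RAntim (I : α → α → Prop) :
    RegularExpression α → α → RegularExpression α → RegularExpression α → Prop
  | chr (a : α) : RAntim I (char a) a epsilon epsilon
  | plusL {E F : RegularExpression α} {a El Er} :
      RAntim I E a El Er → RAntim I (plus E F) a El Er
  | plusR {E F : RegularExpression α} {a Fl Fr} :
      RAntim I F a Fl Fr → RAntim I (plus E F) a Fl Fr
  | compL {E F : RegularExpression α} {a El Er} :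
      RAntim I E a El Er → RAntim I (comp E F) a El (comp Er F)
  | compR {E F : RegularExpression α} {a Fl Fr} :
      RAntim I F a Fl Fr → RAntim I (comp E F) a (comp (Rexp I a E) Fl) Fr
  | st {E : RegularExpression α} {a El Er} :
      RAntim I E a El Er →
      RAntim I (star E) a (comp (star (Rexp I a E)) El) (comp Er (star E))

/-- Refined Antimirov relation lifted to nonempty lists of regexps (unbounded). -/
inductive RAntimL (I : α → α → Prop) :
    List (RegularExpression α) → α → List (RegularExpression α) → Prop
  | split {Γ Δ : List (RegularExpression α)} {E : RegularExpression α} {a El Er} :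
      RAntim I E a El Er →
      RAntimL I (Γ ++ E :: Δ) a (Γ.map (Rexp I a) ++ El :: Er :: Δ)
  | dropL {Γ Δ : List (RegularExpression α)} {E : RegularExpression α} {a El Er} :
      RAntim I E a El Er → [] ∈ El.matches' → Γ ≠ [] →
      RAntimL I (Γ ++ E :: Δ) a (Γ.map (Rexp I a) ++ Er :: Δ)
  | dropR {Γ Δ : List (RegularExpression α)} {E : RegularExpression α} {a El Er} :
      RAntim I E a El Er → [] ∈ Er.matches' → Δ ≠ [] →
      RAntimL I (Γ ++ E :: Δ) a (Γ.map (Rexp I a) ++ El :: Δ)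
  | dropBoth {Γ Δ : List (RegularExpression α)} {E : RegularExpression α} {a El Er} :
      RAntim I E a El Er → [] ∈ El.matches' → [] ∈ Er.matches' → Γ ≠ [] → Δ ≠ [] →
      RAntimL I (Γ ++ E :: Δ) a (Γ.map (Rexp I a) ++ Δ)

/-- Refined Antimirov relation along a word (unbounded). -/
inductive RAntimW (I : α → α → Prop) :
    RegularExpression α → List α → List (RegularExpression α) → Prop
  | nil (E : RegularExpression α) : RAntimW I E [] [E]
  | snoc {E : RegularExpression α} {u Γ a Γ'} :
      RAntimW I E u Γ → RAntimL I Γ a Γ' → RAntimW I E (u ++ [a]) Γ'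

/-- N-bounded refined Antimirov relation lifted to nonempty lists of regexps. -/
inductive RAntimLN (I : α → α → Prop) (N : ℕ) :
    List (RegularExpression α) → α → List (RegularExpression α) → Prop
  | split {Γ Δ : List (RegularExpression α)} {E : RegularExpression α} {a El Er} :
      RAntim I E a El Er → Γ.length + Δ.length < N →
      RAntimLN I N (Γ ++ E :: Δ) a (Γ.map (Rexp I a) ++ El :: Er :: Δ)
  | dropL {Γ Δ : List (RegularExpression α)} {E : RegularExpression α} {a El Er} :
      RAntim I E a El Er → [] ∈ El.matches' → Γ ≠ [] →
      RAntimLN I N (Γ ++ E :: Δ) a (Γ.map (Rexp I a) ++ Er :: Δ)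
  | dropR {Γ Δ : List (RegularExpression α)} {E : RegularExpression α} {a El Er} :
      RAntim I E a El Er → [] ∈ Er.matches' → Δ ≠ [] →
      RAntimLN I N (Γ ++ E :: Δ) a (Γ.map (Rexp I a) ++ El :: Δ)
  | dropBoth {Γ Δ : List (RegularExpression α)} {E : RegularExpression α} {a El Er} :
      RAntim I E a El Er → [] ∈ El.matches' → [] ∈ Er.matches' → Γ ≠ [] → Δ ≠ [] →
      RAntimLN I N (Γ ++ E :: Δ) a (Γ.map (Rexp I a) ++ Δ)

/-- N-bounded refined Antimirov relation along a word. -/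
inductive RAntimWN (I : α → α → Prop) (N : ℕ) :
    RegularExpression α → List α → List (RegularExpression α) → Prop
  | nil (E : RegularExpression α) : RAntimWN I N E [] [E]
  | snoc {E : RegularExpression α} {u Γ a Γ'} :
      RAntimWN I N E u Γ → RAntimLN I N Γ a Γ' → RAntimWN I N E (u ++ [a]) Γ'

/-!
A word `a :: v` is trace equivalent to `z` iff `z = x ++ a :: y` with `a` independent of every
letter of `x` and `v ∼ x ++ y`. Hence `a :: v ∈ [L]` iff `v ∈ [D_a L]`, where `D_a L`
(`extractDeriv I a L`) collects the words `x ++ y` with `x ++ a :: y ∈ L` and `a I x`.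
One Antimirov step computes `D_a` exactly: `D_a ⟦E⟧` is the union of the `⟦E'⟧` with
`E →^I (a, E')`, because, writing `R_a L` (`indepPart I a L`) for the words of `L` independent
of `a`, we have `⟦R_a E⟧ = R_a ⟦E⟧`, `D_a (L M) = D_a(L) M + R_a(L) D_a(M)` and
`D_a (L✶) = R_a(L)✶ D_a(L) L✶`, which are the clauses of the relation. Induction on the word
finishes the proof.
-/

theorem List.exists_of_flatten_eq_append_cons {α : Type*} {ws : List (List α)} {a : α}
    {x y : List α} (h : ws.flatten = x ++ a :: y) :
    ∃ ws₁ x' y' ws₂, ws = ws₁ ++ (x' ++ a :: y') :: ws₂ ∧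
      x = ws₁.flatten ++ x' ∧ y = y' ++ ws₂.flatten := by
  rcases List.flatten_eq_append_iff.mp h with ⟨ws₁, ws₂, rfl, rfl, h₂⟩ |
      ⟨ws₁, x', c, y', ws₂, rfl, rfl, h₂⟩
  · obtain ⟨es, y', ws₃, rfl, hes, rfl⟩ := List.flatten_eq_cons_iff.mp h₂.symm
    refine ⟨ws₁ ++ es, [], y', ws₃, by simp, ?_, by simp⟩
    simp [List.flatten_eq_nil_iff.mpr hes]
  · obtain ⟨rfl, rfl⟩ := List.cons_eq_cons.mp h₂
    exact ⟨ws₁, x', y', ws₂, rfl, rfl, rfl⟩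

namespace TrEq

variable {I : α → α → Prop}

theorem length_eq {u v : List α} (h : TrEq I u v) : u.length = v.length := by
  induction h <;> simp_all

theorem append_right {u v : List α} (w : List α) (h : TrEq I u v) :
    TrEq I (u ++ w) (v ++ w) := by
  induction h with
  | swap x y hab => simpa using swap (I := I) x (y ++ w) hab
  | refl u => exact refl _
  | symm _ ih => exact ih.symm
  | trans _ _ ih₁ ih₂ => exact ih₁.trans ih₂

theorem append_left {u v : List α} (w : List α) (h : TrEq I u v) :
    TrEq I (w ++ u) (w ++ v) := by
  induction h with
  | swap x y hab => simpa using swap (I := I) (w ++ x) y hab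
  | refl u => exact refl _
  | symm _ ih => exact ih.symm
  | trans _ _ ih₁ ih₂ => exact ih₁.trans ih₂

theorem cons (a : α) {u v : List α} (h : TrEq I u v) : TrEq I (a :: u) (a :: v) :=
  h.append_left [a]

theorem cons_append_comm (a : α) {x : List α} (y : List α) (hx : ∀ b ∈ x, I a b) :
    TrEq I (a :: (x ++ y)) (x ++ a :: y) := by
  induction x with
  | nil => exact refl _
  | cons b x ih =>
    have hab : TrEq I (a :: b :: (x ++ y)) (b :: a :: (x ++ y)) := by
      simpa using swap (I := I) [] (x ++ y) (hx b (by simp))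
    exact hab.trans ((ih fun c hc => hx c (by simp [hc])).cons b)

end TrEq

section Extraction

variable {I : α → α → Prop}

-- The invariant that lets `TrEq.exists_of_cons` be proved by induction on `TrEq`.
def ExtractionTransfers (I : α → α → Prop) (w z : List α) : Prop :=
  ∀ a x y, w = x ++ a :: y → (∀ b ∈ x, I a b) →
    ∃ x' y', z = x' ++ a :: y' ∧ (∀ b ∈ x', I a b) ∧ TrEq I (x ++ y) (x' ++ y')

theorem extractionTransfers_swap (x₀ y₀ : List α) {c d : α} (hcd : I c d) :
    ExtractionTransfers I (x₀ ++ c :: d :: y₀) (x₀ ++ d :: c :: y₀) := by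
  intro a x y heq hx
  rcases List.append_eq_append_iff.mp heq with ⟨t, rfl, ht⟩ | ⟨t, rfl, ht⟩
  · rcases t with _ | ⟨_, _ | ⟨_, t⟩⟩ <;> simp only [List.nil_append, List.cons_append,
      List.cons.injEq] at ht
    · obtain ⟨rfl, rfl⟩ := ht
      refine ⟨x₀ ++ [d], y₀, by simp, ?_, by simpa using TrEq.refl _⟩
      simpa [or_imp, forall_and] using ⟨by simpa using hx, hcd⟩
    · obtain ⟨rfl, rfl, rfl⟩ := ht
      exact ⟨x₀, c :: y₀, rfl, fun b hb => hx b (by simp [hb]), by simpa using TrEq.refl _⟩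
    · obtain ⟨rfl, rfl, rfl⟩ := ht
      refine ⟨x₀ ++ d :: c :: t, y, by simp, fun b hb => hx b (by simp at hb ⊢; tauto), ?_⟩
      simpa using TrEq.swap (I := I) x₀ (t ++ y) hcd
  · rcases t with _ | ⟨_, t⟩ <;> simp only [List.nil_append, List.cons_append,
      List.cons.injEq] at ht
    · obtain ⟨rfl, rfl⟩ := ht
      refine ⟨x ++ [d], y₀, by simp, ?_, by simpa using TrEq.refl _⟩
      simpa [or_imp, forall_and] using ⟨hx, hcd⟩
    · obtain ⟨rfl, rfl⟩ := ht
      refine ⟨x, t ++ d :: c :: y₀, by simp, hx, ?_⟩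
      simpa using TrEq.swap (I := I) (x ++ t) y₀ hcd

theorem TrEq.extractionTransfers (hsym : Symmetric I) {w z : List α} (h : TrEq I w z) :
    ExtractionTransfers I w z ∧ ExtractionTransfers I z w := by
  induction h with
  | swap x y hab => simpa using ⟨extractionTransfers_swap x y hab,
      extractionTransfers_swap x y (hsym hab)⟩
  | refl u =>
    have hrefl : ExtractionTransfers I u u := fun _ x y h hx => ⟨x, y, h, hx, .refl _⟩
    exact ⟨hrefl, hrefl⟩
  | symm _ ih => exact ih.symm
  | trans _ _ ih₁ ih₂ =>
    refine ⟨fun a x y h hx => ?_, fun a x y h hx => ?_⟩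
    · obtain ⟨x₁, y₁, h₁, hx₁, e₁⟩ := ih₁.1 a x y h hx
      obtain ⟨x₂, y₂, h₂, hx₂, e₂⟩ := ih₂.1 a x₁ y₁ h₁ hx₁
      exact ⟨x₂, y₂, h₂, hx₂, e₁.trans e₂⟩
    · obtain ⟨x₁, y₁, h₁, hx₁, e₁⟩ := ih₂.2 a x y h hx
      obtain ⟨x₂, y₂, h₂, hx₂, e₂⟩ := ih₁.2 a x₁ y₁ h₁ hx₁
      exact ⟨x₂, y₂, h₂, hx₂, e₁.trans e₂⟩

theorem TrEq.exists_of_cons (hsym : Symmetric I) {a : α} {v z : List α}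
    (h : TrEq I (a :: v) z) :
    ∃ x y, z = x ++ a :: y ∧ (∀ b ∈ x, I a b) ∧ TrEq I v (x ++ y) := by
  simpa using (h.extractionTransfers hsym).1 a [] v rfl (by simp)

end Extraction

def extractDeriv (I : α → α → Prop) (a : α) (L : Language α) : Language α :=
  {w | ∃ x y, x ++ a :: y ∈ L ∧ (∀ b ∈ x, I a b) ∧ w = x ++ y}

section TraceClosure

variable {I : α → α → Prop}

theorem nil_mem_trClosure_iff {L : Language α} : [] ∈ TrClosure I L ↔ [] ∈ L := by
  constructor
  · rintro ⟨z, hz, h⟩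
    rwa [List.eq_nil_of_length_eq_zero h.length_eq.symm] at hz
  · exact fun h => ⟨[], h, .refl _⟩

theorem cons_mem_trClosure_iff (hsym : Symmetric I) {a : α} {v : List α} {L : Language α} :
    a :: v ∈ TrClosure I L ↔ v ∈ TrClosure I (extractDeriv I a L) := by
  constructor
  · rintro ⟨z, hz, h⟩
    obtain ⟨x, y, rfl, hx, e⟩ := h.exists_of_cons hsym
    exact ⟨x ++ y, ⟨x, y, hz, hx, rfl⟩, e⟩
  · rintro ⟨-, ⟨x, y, hz, hx, rfl⟩, e⟩
    exact ⟨_, hz, (e.cons a).trans (.cons_append_comm a y hx)⟩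

end TraceClosure

def indepPart (I : α → α → Prop) (a : α) (L : Language α) : Language α :=
  {w | w ∈ L ∧ ∀ b ∈ w, I a b}

section Derivatives

variable {I : α → α → Prop} {a : α} {L M : Language α} {w : List α}

open Language Computability

@[simp]
theorem mem_indepPart : w ∈ indepPart I a L ↔ w ∈ L ∧ ∀ b ∈ w, I a b := Iff.rfl

@[simp]
theorem mem_extractDeriv :
    w ∈ extractDeriv I a L ↔ ∃ x y, x ++ a :: y ∈ L ∧ (∀ b ∈ x, I a b) ∧ w = x ++ y :=
  Iff.rfl

theorem indepPart_mul : indepPart I a (L * M) = indepPart I a L * indepPart I a M := by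
  ext w
  simp only [mem_indepPart, mem_mul]
  constructor
  · rintro ⟨⟨u, hu, v, hv, rfl⟩, h⟩
    exact ⟨u, ⟨hu, fun b hb => h b (by simp [hb])⟩, v, ⟨hv, fun b hb => h b (by simp [hb])⟩,
      rfl⟩
  · rintro ⟨u, ⟨hu, hu'⟩, v, ⟨hv, hv'⟩, rfl⟩
    exact ⟨⟨u, hu, v, hv, rfl⟩, by simpa [or_imp, forall_and] using ⟨hu', hv'⟩⟩

theorem indepPart_kstar : indepPart I a (L∗) = (indepPart I a L)∗ := by
  ext w
  simp only [mem_indepPart, mem_kstar]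
  constructor
  · rintro ⟨⟨ws, rfl, hws⟩, h⟩
    exact ⟨ws, rfl, fun y hy =>
      ⟨hws y hy, fun b hb => h b (List.mem_flatten.mpr ⟨y, hy, hb⟩)⟩⟩
  · rintro ⟨ws, rfl, hws⟩
    refine ⟨⟨ws, rfl, fun y hy => (hws y hy).1⟩, fun b hb => ?_⟩
    obtain ⟨y, hy, hb⟩ := List.mem_flatten.mp hb
    exact (hws y hy).2 b hb

theorem matches'_Rexp (E : RegularExpression α) :
    (Rexp I a E).matches' = indepPart I a E.matches' := by
  induction E with
  | zero => ext; simp [Rexp]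
  | epsilon => ext; simp +contextual [Rexp]
  | char c =>
    ext w
    by_cases h : I a c
    · simp only [Rexp, h, if_true, matches', mem_indepPart]
      show w = [c] ↔ w = [c] ∧ _
      simp +contextual [h]
    · simp only [Rexp, h, if_false, matches', mem_indepPart]
      show False ↔ w = [c] ∧ _
      simp +contextual [h]
  | plus E F ihE ihF =>
    ext; simp only [Rexp, matches', ihE, ihF, mem_add, mem_indepPart, or_and_right]
  | comp E F ihE ihF => simp [Rexp, ihE, ihF, indepPart_mul]
  | star E ih => simp [Rexp, ih, indepPart_kstar]

theorem mem_extractDeriv_singleton {c : α} :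
    w ∈ extractDeriv I a {[c]} ↔ a = c ∧ w = [] := by
  constructor
  · rintro ⟨x, y, h, -, rfl⟩
    replace h : x ++ a :: y = [c] := h
    rcases x with _ | ⟨b, x⟩ <;> simp_all
  · rintro ⟨rfl, rfl⟩
    exact ⟨[], [], rfl, by simp, rfl⟩

theorem extractDeriv_add :
    extractDeriv I a (L + M) = extractDeriv I a L + extractDeriv I a M := by
  ext w
  simp only [mem_extractDeriv, mem_add]
  constructor
  · rintro ⟨x, y, hL | hM, hx, rfl⟩
    exacts [.inl ⟨x, y, hL, hx, rfl⟩, .inr ⟨x, y, hM, hx, rfl⟩]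
  · rintro (⟨x, y, h, hx, rfl⟩ | ⟨x, y, h, hx, rfl⟩)
    exacts [⟨x, y, .inl h, hx, rfl⟩, ⟨x, y, .inr h, hx, rfl⟩]

theorem extractDeriv_mul :
    extractDeriv I a (L * M) =
      extractDeriv I a L * M + indepPart I a L * extractDeriv I a M := by
  ext w
  simp only [mem_extractDeriv, mem_add, mem_mul, mem_indepPart]
  constructor
  · rintro ⟨x, y, ⟨u, hu, v, hv, huv⟩, hx, rfl⟩
    rcases List.append_eq_append_iff.mp huv with ⟨t, rfl, ht⟩ | ⟨t, rfl, ht⟩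
    · exact .inr ⟨u, ⟨hu, fun b hb => hx b (by simp [hb])⟩, t ++ y,
        ⟨t, y, ht ▸ hv, fun b hb => hx b (by simp [hb]), rfl⟩, by simp⟩
    · rcases t with _ | ⟨_, t⟩
      · simp only [List.nil_append, List.append_nil] at ht hu
        exact .inr ⟨x, ⟨hu, hx⟩, y, ⟨[], y, ht ▸ hv, by simp, rfl⟩, rfl⟩
      · obtain ⟨rfl, rfl⟩ := List.cons_eq_cons.mp ht
        exact .inl ⟨x ++ t, ⟨x, t, hu, hx, rfl⟩, v, hv, by simp⟩
  · rintro (⟨-, ⟨x, t, hu, hx, rfl⟩, v, hv, rfl⟩ |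
      ⟨u, ⟨hu, hu'⟩, -, ⟨t, y, hv, hx, rfl⟩, rfl⟩)
    · exact ⟨x, t ++ v, ⟨_, hu, v, hv, by simp⟩, hx, by simp⟩
    · refine ⟨u ++ t, y, ⟨u, hu, _, hv, by simp⟩, ?_, by simp⟩
      simpa [or_imp, forall_and] using ⟨hu', hx⟩

theorem extractDeriv_kstar :
    extractDeriv I a (L∗) = (indepPart I a L)∗ * (extractDeriv I a L * L∗) := by
  ext w
  simp only [mem_extractDeriv, mem_mul, mem_kstar, mem_indepPart]
  constructor
  · rintro ⟨x, y, ⟨ws, hws, hL⟩, hx, rfl⟩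
    obtain ⟨ws₁, x', y', ws₂, rfl, rfl, rfl⟩ := List.exists_of_flatten_eq_append_cons hws.symm
    simp only [List.mem_append, List.mem_cons] at hL hx
    refine ⟨ws₁.flatten, ⟨ws₁, rfl, fun v hv => ⟨hL v (.inl hv), ?_⟩⟩, x' ++ y' ++ ws₂.flatten,
      ⟨x' ++ y', ⟨x', y', hL _ (.inr (.inl rfl)), ?_, rfl⟩, ws₂.flatten, ⟨ws₂, rfl, ?_⟩, rfl⟩,
      by simp⟩
    · exact fun b hb => hx b (.inl (List.mem_flatten.mpr ⟨v, hv, hb⟩))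
    · exact fun b hb => hx b (.inr hb)
    · exact fun v hv => hL v (.inr (.inr hv))
  · rintro ⟨-, ⟨ws₁, rfl, hws₁⟩, -, ⟨-, ⟨x, y, hxy, hx, rfl⟩, -, ⟨ws₂, rfl, hws₂⟩, rfl⟩,
      rfl⟩
    refine ⟨ws₁.flatten ++ x, y ++ ws₂.flatten,
      ⟨ws₁ ++ (x ++ a :: y) :: ws₂, by simp, ?_⟩, ?_, by simp⟩
    · simp only [List.mem_append, List.mem_cons]
      rintro v (hv | rfl | hv)
      exacts [(hws₁ v hv).1, hxy, hws₂ v hv]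
    · simp only [List.mem_append, List.mem_flatten]
      rintro b (⟨v, hv, hb⟩ | hb)
      exacts [(hws₁ v hv).2 b hb, hx b hb]

end Derivatives

section Antimirov

variable {I : α → α → Prop}

open Language

theorem mem_extractDeriv_matches'_iff {a : α} {E : RegularExpression α} {v : List α} :
    v ∈ extractDeriv I a E.matches' ↔ ∃ E', Antim I E a E' ∧ v ∈ E'.matches' := by
  induction E generalizing v with
  | zero =>
    refine ⟨fun ⟨_, _, h, _⟩ => absurd h (notMem_zero _), fun ⟨_, h, _⟩ => nomatch h⟩
  | epsilon =>
    refine ⟨fun ⟨x, y, h, _⟩ => ?_, fun ⟨_, h, _⟩ => nomatch h⟩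
    simp [matches'] at h
  | char c =>
    rw [matches', mem_extractDeriv_singleton]
    constructor
    · rintro ⟨rfl, rfl⟩
      exact ⟨_, .chr a, rfl⟩
    · rintro ⟨_, ⟨⟩, rfl⟩
      exact ⟨rfl, rfl⟩
  | plus E F ihE ihF =>
    rw [matches', extractDeriv_add, mem_add, ihE, ihF]
    constructor
    · rintro (⟨E', h, hv⟩ | ⟨F', h, hv⟩)
      exacts [⟨E', .plusL h, hv⟩, ⟨F', .plusR h, hv⟩]
    · rintro ⟨G, h, hv⟩
      cases h with
      | plusL h => exact .inl ⟨_, h, hv⟩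
      | plusR h => exact .inr ⟨_, h, hv⟩
  | comp E F ihE ihF =>
    rw [matches', extractDeriv_mul, mem_add, mem_mul, mem_mul, ← matches'_Rexp]
    constructor
    · rintro (⟨u, hu, w, hw, rfl⟩ | ⟨u, hu, w, hw, rfl⟩)
      · obtain ⟨E', h, hu⟩ := ihE.mp hu
        exact ⟨E' * F, .compL h, append_mem_mul hu hw⟩
      · obtain ⟨F', h, hw⟩ := ihF.mp hw
        exact ⟨Rexp I a E * F', .compR h, append_mem_mul hu hw⟩
    · rintro ⟨G, h, hv⟩
      cases h with
      | compL h =>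
        obtain ⟨u, hu, w, hw, rfl⟩ := mem_mul.mp hv
        exact .inl ⟨u, ihE.mpr ⟨_, h, hu⟩, w, hw, rfl⟩
      | compR h =>
        obtain ⟨u, hu, w, hw, rfl⟩ := mem_mul.mp hv
        exact .inr ⟨u, hu, w, ihF.mpr ⟨_, h, hw⟩, rfl⟩
  | star E ih =>
    rw [matches', extractDeriv_kstar, mem_mul, ← matches'_Rexp]
    constructor
    · rintro ⟨u, hu, w, hw, rfl⟩
      obtain ⟨s, hs, t, ht, rfl⟩ := mem_mul.mp hw
      obtain ⟨E', h, hs⟩ := ih.mp hs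
      exact ⟨_, .st h, append_mem_mul hu (append_mem_mul hs ht)⟩
    · rintro ⟨G, h, hv⟩
      cases h with
      | st h =>
        obtain ⟨u, hu, w, hw, rfl⟩ := mem_mul.mp hv
        obtain ⟨s, hs, t, ht, rfl⟩ := mem_mul.mp hw
        exact ⟨u, hu, s ++ t, append_mem_mul (ih.mpr ⟨_, h, hs⟩) ht, rfl⟩

theorem cons_mem_trClosure_matches'_iff (hsym : Symmetric I) {a : α} {E : RegularExpression α}
    {v : List α} : a :: v ∈ TrClosure I E.matches' ↔
      ∃ E', Antim I E a E' ∧ v ∈ TrClosure I E'.matches' := by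
  rw [cons_mem_trClosure_iff hsym]
  constructor
  · rintro ⟨z, hz, e⟩
    obtain ⟨E', h, hz⟩ := mem_extractDeriv_matches'_iff.mp hz
    exact ⟨E', h, z, hz, e⟩
  · rintro ⟨E', h, z, hz, e⟩
    exact ⟨z, mem_extractDeriv_matches'_iff.mpr ⟨E', h, hz⟩, e⟩

theorem antimW_nil_iff {E E' : RegularExpression α} : AntimW I E [] E' ↔ E' = E := by
  refine ⟨fun h => ?_, by rintro rfl; exact .nil _⟩
  generalize hw : [] = w at h
  cases h with
  | nil => rfl
  | snoc => simp at hw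

theorem antimW_cons_iff {E E'' : RegularExpression α} {a : α} {u : List α} :
    AntimW I E (a :: u) E'' ↔ ∃ E', Antim I E a E' ∧ AntimW I E' u E'' := by
  constructor
  · generalize hw : a :: u = w
    intro h
    induction h generalizing u with
    | nil => simp at hw
    | @snoc u₀ F b G h hb ih =>
      rcases u₀ with _ | ⟨c, u₀⟩
      · obtain ⟨rfl, rfl⟩ := List.cons_eq_cons.mp hw
        exact ⟨G, antimW_nil_iff.mp h ▸ hb, .nil G⟩
      · obtain ⟨rfl, rfl⟩ := List.cons_eq_cons.mp hw
        obtain ⟨E', ha, h⟩ := ih rfl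
        exact ⟨E', ha, .snoc h hb⟩
  · rintro ⟨E', ha, h⟩
    induction h with
    | nil => exact .snoc (.nil E) ha
    | snoc _ hb ih => exact .snoc ih hb

end Antimirov

theorem stmt10_general {α : Type u} (I : α → α → Prop)
    (hsym : Symmetric I) (E : RegularExpression α) (u : List α) :
    u ∈ TrClosure I E.matches' ↔ ∃ E', AntimW I E u E' ∧ [] ∈ E'.matches' := by
  induction u generalizing E with
  | nil => simp [nil_mem_trClosure_iff, antimW_nil_iff]
  | cons a u ih =>
    simp only [cons_mem_trClosure_matches'_iff hsym, ih, antimW_cons_iff]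
    aesop

/-- u ∈ [⟦E⟧] iff ∃ E′, E →^{I*} (u, E′) and E′↓. -/
theorem stmt10 {α : Type u} [Fintype α] (I : α → α → Prop)
    (hirr : Irreflexive I) (hsym : Symmetric I) (E : RegularExpression α) (u : List α) :
    u ∈ TrClosure I E.matches' ↔ ∃ E', AntimW I E u E' ∧ [] ∈ E'.matches' :=
  stmt10_general I hsym E u
end

section
/- If a language L over Σ is connected, then for every nonempty word u, R_u (D^I_u L) ⊆ {ε}. -/
open RegularExpression
open scoped Classical

universe u

variable {α : Type u}

/-!
If `u ∼⊲ z ⊳ v`, then `z` is a permutation of `u ++ v`; if moreover `v I u`, no dependence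
edge of `z` leaves the positions carrying letters of `u`. If `z` is connected and `u ≠ []`,
every letter of `z` therefore lies in `u`, and a letter of `v` would be independent of
itself, which irreflexivity forbids.
-/

section

variable {I : α → α → Prop}

theorem TrEq.perm {u v : List α} (h : TrEq I u v) : u.Perm v := by
  induction h with
  | swap x y _ =>
    simpa only [List.append_assoc] using ((List.Perm.swap _ _ []).append_right y).append_left x
  | refl u => exact List.Perm.refl u
  | symm _ ih => exact ih.symm
  | trans _ _ ih₁ ih₂ => exact ih₁.trans ih₂

theorem List.perm_interleave_flatten (f g : ℕ → List α) (n : ℕ) :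
    (g 0 ++ ((List.range n).map fun i => f (i + 1) ++ g (i + 1)).flatten).Perm
      (((List.range n).map fun i => f (i + 1)).flatten ++
        ((List.range (n + 1)).map g).flatten) := by
  induction n with
  | zero => simp
  | succ n ih =>
    rw [List.perm_iff_count] at ih ⊢
    intro c
    have := ih c
    simp only [List.range_succ, List.map_append, List.map_cons, List.map_nil, List.flatten_append,
      List.flatten_cons, List.flatten_nil, List.append_nil, List.count_append] at this ⊢
    omega

theorem ScatN.perm_append {n : ℕ} {u z v : List α} (h : ScatN I n u z v) : z.Perm (u ++ v) := by
  obtain ⟨us, vs, -, -, rfl, rfl, rfl, -⟩ := h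
  exact List.perm_interleave_flatten us vs n

theorem Scat.perm_append {u z v : List α} (h : Scat I u z v) : z.Perm (u ++ v) :=
  h.choose_spec.perm_append

theorem EqScat.perm_append {u z v : List α} (h : EqScat I u z v) : z.Perm (u ++ v) := by
  obtain ⟨u', hu, hscat⟩ := h
  exact hscat.perm_append.trans (hu.perm.symm.append_right v)

theorem WordConnected.forall_of_exists {w : List α} (hw : WordConnected I w) {p : α → Prop}
    (hp : ∀ a ∈ w, ∀ b ∈ w, p a → ¬p b → I a b ∧ I b a) (hex : ∃ a ∈ w, p a) :
    ∀ b ∈ w, p b := by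
  have step : ∀ {i j}, (depGraph I w).Adj i j → p (w.get i) → p (w.get j) := fun hij hi =>
    of_not_not fun hj => hij.2 (hp _ (List.get_mem _ _) _ (List.get_mem _ _) hi hj)
  have walk : ∀ {i j}, (depGraph I w).Walk i j → p (w.get i) → p (w.get j) := by
    intro i j q
    induction q with
    | nil => exact id
    | cons hij _ ih => exact ih ∘ step hij
  obtain ⟨a, ha, hpa⟩ := hex
  obtain ⟨i, rfl⟩ := List.get_of_mem ha
  intro b hb
  obtain ⟨j, rfl⟩ := List.get_of_mem hb
  exact walk (hw i j).some hpa

theorem WordConnected.eq_nil_of_perm_append (hirr : Irreflexive I) (hsym : Symmetric I)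
    {u v z : List α} (hz : WordConnected I z) (hperm : z.Perm (u ++ v)) (hvu : WIndep I v u)
    (hu : u ≠ []) : v = [] := by
  have mem_z : ∀ {c}, c ∈ z ↔ c ∈ u ∨ c ∈ v := by simp [hperm.mem_iff]
  have all_in_u : ∀ c ∈ z, c ∈ u := by
    refine hz.forall_of_exists (fun a _ b hb ha hb' => ?_) ?_
    · have hbv : b ∈ v := (mem_z.1 hb).resolve_left hb'
      exact ⟨hsym (hvu b hbv a ha), hvu b hbv a ha⟩
    · obtain ⟨a, ha⟩ := List.exists_mem_of_ne_nil u hu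
      exact ⟨a, mem_z.2 (Or.inl ha), ha⟩
  refine List.eq_nil_iff_forall_not_mem.2 fun c hc => hirr c ?_
  exact hvu c hc c (all_in_u c (mem_z.2 (Or.inr hc)))

end

theorem stmt11_general {α : Type u} (I : α → α → Prop)
    (hirr : Irreflexive I) (hsym : Symmetric I) (L : Set (List α))
    (hconn : ∀ w ∈ L, WordConnected I w) (u : List α) (hu : u ≠ []) :
    RPart I u (RDeriv I u L) ⊆ {([] : List α)} := by
  rintro v ⟨⟨z, hzL, hzuv⟩, hvu⟩
  exact (hconn z hzL).eq_nil_of_perm_append hirr hsym hzuv.perm_append hvu hu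

/-- if L is connected then for every nonempty u, R_u (D^I_u L) ⊆ {ε}. -/
theorem stmt11 {α : Type u} [Fintype α] (I : α → α → Prop)
    (hirr : Irreflexive I) (hsym : Symmetric I) (L : Set (List α))
    (hconn : ∀ w ∈ L, WordConnected I w) (u : List α) (hu : u ≠ []) :
    RPart I u (RDeriv I u L) ⊆ {([] : List α)} :=
  stmt11_general I hirr hsym L hconn u hu
end
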